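/- arXiv:2306.07663 — 9 statements merged into one kernel-verified Lean document; each statement's English description precedes it below -/
import Mathlib

section
/- Assume N > 0, γ > 0, p̂ = N/γ, and cost coefficients c_1, …, c_n ≥ 0. If a profile (S_1, …, S_n) of feasible supply functions is a pure-strategy Nash equilibrium of the pay-as-bid auction game with strategy space all feasible supply functions (i.e., for each i, S_i maximizes u_i(·, S_{-i}) over feasible supply functions), then S_i is identically zero on [0, p̂] for every i. -/
open Set

/-- A feasible supply function on `[0, phat]`: continuous, nondecreasing, zero at zero. -/
def Feasible (phat : ℝ) (S : ℝ → ℝ) : Prop :=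
  ContinuousOn S (Icc 0 phat) ∧ MonotoneOn S (Icc 0 phat) ∧ S 0 = 0

/-- `p` is a market-clearing price for the profile `S` with demand `D(p) = N - γ p`. -/
def Clears (N γ : ℝ) {n : ℕ} (S : Fin n → ℝ → ℝ) (p : ℝ) : Prop :=
  p ∈ Icc 0 (N / γ) ∧ N - γ * p = ∑ i, S i p

/-- Pay-as-bid utility of an agent with cost coefficient `c`, supply `S`,
at clearing price `pstar`. -/
noncomputable def utility (c : ℝ) (S : ℝ → ℝ) (pstar : ℝ) : ℝ :=
  pstar * S pstar - (∫ p in (0:ℝ)..pstar, S p) - c * S pstar ^ 2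

/-- `S` is `K`-Lipschitz on `[0, phat]`. -/
def KLip (phat K : ℝ) (S : ℝ → ℝ) : Prop :=
  ∀ x ∈ Icc 0 phat, ∀ y ∈ Icc 0 phat, |S x - S y| ≤ K * |x - y|

/-!
An agent may replace `S i` by any feasible `T` with `T p* = S i p*`: the clearing price, the
quantity sold and the cost are unchanged, so only the term `∫₀^{p*} S i` of the utility moves.
Ramps that are zero up to `a` and rise linearly to `S i p*` at `p*` make that integral as small as
`(p* - a) S i p*`, so at a Nash equilibrium `∫₀^{p*} S i ≤ 0`. A nonnegative nondecreasing
continuous function with nonpositive integral vanishes on `[0, p*]`; then every supply is zero at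
`p*`, the demand `N - γ p*` vanishes, and `p* = N / γ`.
-/

open Filter Topology intervalIntegral

noncomputable def ramp (M a b : ℝ) (x : ℝ) : ℝ := M * max 0 ((x - a) / (b - a))

section Ramp

variable {M a b : ℝ}

lemma continuous_ramp : Continuous (ramp M a b) := by
  unfold ramp; fun_prop

lemma ramp_of_le {x : ℝ} (hab : a ≤ b) (hx : x ≤ a) : ramp M a b x = 0 := by
  rw [ramp, max_eq_left (div_nonpos_of_nonpos_of_nonneg (by linarith) (by linarith)), mul_zero]

lemma ramp_right (hab : a < b) : ramp M a b b = M := by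
  rw [ramp, div_self (sub_ne_zero.2 hab.ne'), max_eq_right zero_le_one, mul_one]

lemma ramp_le {x : ℝ} (hM : 0 ≤ M) (hab : a < b) (hx : x ≤ b) : ramp M a b x ≤ M :=
  mul_le_of_le_one_right hM <| max_le zero_le_one <|
    (div_le_one (sub_pos.2 hab)).2 (by linarith)

lemma monotone_ramp (hM : 0 ≤ M) (hab : a ≤ b) : Monotone (ramp M a b) := fun _ _ hxy =>
  mul_le_mul_of_nonneg_left (max_le_max le_rfl
    (div_le_div_of_nonneg_right (by linarith) (sub_nonneg.2 hab))) hM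

lemma feasible_ramp (phat : ℝ) (hM : 0 ≤ M) (ha : 0 ≤ a) (hab : a ≤ b) :
    Feasible phat (ramp M a b) :=
  ⟨continuous_ramp.continuousOn, (monotone_ramp hM hab).monotoneOn _, ramp_of_le hab ha⟩

lemma integral_ramp_le (hM : 0 ≤ M) (ha : 0 ≤ a) (hab : a < b) :
    ∫ x in (0:ℝ)..b, ramp M a b x ≤ (b - a) * M := by
  have hflat : ∫ x in (0:ℝ)..a, ramp M a b x = 0 := by
    rw [integral_congr (g := fun _ => 0) fun x hx => ramp_of_le hab.le (uIcc_of_le ha ▸ hx).2]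
    exact integral_zero
  have hrise : ∫ x in a..b, ramp M a b x ≤ ∫ _ in a..b, M :=
    integral_mono_on hab.le (continuous_ramp.intervalIntegrable _ _) intervalIntegrable_const
      fun x hx => ramp_le hM hab hx.2
  rw [← integral_add_adjacent_intervals (continuous_ramp.intervalIntegrable _ _)
    (continuous_ramp.intervalIntegrable _ _), hflat, zero_add]
  simpa using hrise

end Ramp

namespace Feasible

variable {phat p : ℝ} {S : ℝ → ℝ}

lemma nonneg (hS : Feasible phat S) {x : ℝ} (hx : x ∈ Icc 0 phat) : 0 ≤ S x :=
  hS.2.2 ▸ hS.2.1 (left_mem_Icc.2 (hx.1.trans hx.2)) hx hx.1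

lemma intervalIntegrable (hS : Feasible phat S) {x y : ℝ} (hx : 0 ≤ x) (hxy : x ≤ y)
    (hy : y ≤ phat) : IntervalIntegrable S MeasureTheory.volume x y :=
  ContinuousOn.intervalIntegrable_of_Icc hxy (hS.1.mono (Icc_subset_Icc hx hy))

lemma integral_nonpos_of_forall_integral_le (hS : Feasible phat S) (hp : p ∈ Icc 0 phat)
    (hmin : ∀ T, Feasible phat T → T p = S p → ∫ x in (0:ℝ)..p, S x ≤ ∫ x in (0:ℝ)..p, T x) :
    ∫ x in (0:ℝ)..p, S x ≤ 0 := by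
  rcases hp.1.eq_or_lt with rfl | hp0
  · rw [integral_same]
  have hM := hS.nonneg hp
  have hramp : ∀ᶠ a in 𝓝[<] p, ∫ x in (0:ℝ)..p, S x ≤ (p - a) * S p := by
    filter_upwards [Ioo_mem_nhdsLT hp0] with a ha
    exact (hmin _ (feasible_ramp phat hM ha.1.le ha.2.le) (ramp_right ha.2)).trans
      (integral_ramp_le hM ha.1.le ha.2)
  have hlim : Tendsto (fun a => (p - a) * S p) (𝓝[<] p) (𝓝 0) := by
    refine tendsto_nhdsWithin_of_tendsto_nhds ?_
    simpa using ((continuous_const.sub continuous_id).mul continuous_const).tendsto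
      (f := fun a => (p - a) * S p) p
  exact ge_of_tendsto hlim hramp

lemma eqOn_zero_of_integral_nonpos (hS : Feasible phat S) (hp : p ∈ Icc 0 phat)
    (hI : ∫ x in (0:ℝ)..p, S x ≤ 0) : EqOn S 0 (Icc 0 p) := by
  rcases hp.1.eq_or_lt with rfl | hp0
  · simpa [Icc_self] using hS.2.2
  have hIcc : Icc 0 p ⊆ Icc 0 phat := Icc_subset_Icc le_rfl hp.2
  have hIco : EqOn S 0 (Ico 0 p) := fun x hx => by
    show S x = 0
    have hxS := hS.nonneg (hIcc (Ico_subset_Icc_self hx))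
    have htail : ∫ _ in x..p, S x ≤ ∫ y in x..p, S y :=
      integral_mono_on hx.2.le intervalIntegrable_const
        (hS.intervalIntegrable hx.1 hx.2.le hp.2) fun y hy =>
          hS.2.1 (hIcc (Ico_subset_Icc_self hx)) (hIcc ⟨hx.1.trans hy.1, hy.2⟩) hy.1
    have hsub : ∫ y in x..p, S y ≤ ∫ y in (0:ℝ)..p, S y :=
      integral_mono_interval hx.1 hx.2.le le_rfl
        (MeasureTheory.ae_restrict_of_forall_mem measurableSet_Ioc fun y hy =>
          hS.nonneg (hIcc (Ioc_subset_Icc_self hy)))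
        (hS.intervalIntegrable le_rfl hp.1 hp.2)
    rw [integral_const, smul_eq_mul] at htail
    have := sub_pos.2 hx.2
    exact le_antisymm (by nlinarith) hxS
  exact hIco.of_subset_closure (hS.1.mono hIcc) continuousOn_const Ico_subset_Icc_self
    (closure_Ico hp0.ne).ge

end Feasible

lemma Clears.update {N γ p : ℝ} {n : ℕ} {S : Fin n → ℝ → ℝ} (hS : Clears N γ S p) {i : Fin n}
    {T : ℝ → ℝ} (hT : T p = S i p) : Clears N γ (Function.update S i T) p := by
  refine ⟨hS.1, hS.2.trans (Finset.sum_congr rfl fun j _ => ?_)⟩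
  rcases eq_or_ne j i with rfl | hj
  · rw [Function.update_self, hT]
  · rw [Function.update_of_ne hj]

lemma utility_le_utility_iff {c p : ℝ} {S T : ℝ → ℝ} (hT : T p = S p) :
    utility c T p ≤ utility c S p ↔ ∫ x in (0:ℝ)..p, S x ≤ ∫ x in (0:ℝ)..p, T x := by
  rw [utility, utility, hT]
  constructor <;> intro h <;> linarith

theorem stmt2_general (n : ℕ) (N γ : ℝ) (hγ : 0 < γ)
    (c : Fin n → ℝ)
    (S : Fin n → ℝ → ℝ) (hS : ∀ j, Feasible (N / γ) (S j))
    (pstar : ℝ) (hp : Clears N γ S pstar)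
    (hNash : ∀ i, ∀ T, Feasible (N / γ) T →
      ∀ q, Clears N γ (Function.update S i T) q →
        utility (c i) T q ≤ utility (c i) (S i) pstar) :
    ∀ i, ∀ p ∈ Icc 0 (N / γ), S i p = 0 := by
  have hzero : ∀ i, EqOn (S i) 0 (Icc 0 pstar) := fun i =>
    (hS i).eqOn_zero_of_integral_nonpos hp.1 <|
      (hS i).integral_nonpos_of_forall_integral_le hp.1 fun T hT hTp =>
        (utility_le_utility_iff hTp).1 (hNash i T hT pstar (hp.update hTp))
  have hpstar : pstar = N / γ := by
    have hsum : ∑ j, S j pstar = 0 :=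
      Finset.sum_eq_zero fun j _ => hzero j (right_mem_Icc.2 hp.1.1)
    rw [eq_div_iff hγ.ne']
    linarith [hp.2]
  intro i p hp'
  exact hzero i (hpstar ▸ hp')

/-- any pure-strategy Nash equilibrium of the pay-as-bid auction game
with strategy space all feasible supply functions consists of identically zero
supply functions. -/
theorem stmt2 (n : ℕ) (N γ : ℝ) (hN : 0 < N) (hγ : 0 < γ)
    (c : Fin n → ℝ) (hc : ∀ i, 0 ≤ c i)
    (S : Fin n → ℝ → ℝ) (hS : ∀ j, Feasible (N / γ) (S j))
    (pstar : ℝ) (hp : Clears N γ S pstar)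
    (hNash : ∀ i, ∀ T, Feasible (N / γ) T →
      ∀ q, Clears N γ (Function.update S i T) q →
        utility (c i) T q ≤ utility (c i) (S i) pstar) :
    ∀ i, ∀ p ∈ Icc 0 (N / γ), S i p = 0 :=
  stmt2_general n N γ hγ c S hS pstar hp hNash
end

section
/- (Main theorem) Assume N > 0, γ > 0, p̂ = N/γ, K > 0, and cost coefficients c_1, …, c_n ≥ 0. Then there exist p_1, …, p_n ∈ [0, p̂] such that the profile S_i*(p) = K·max(p − p_i, 0), i = 1, …, n, is a Nash equilibrium of the pay-as-bid auction game with strategy space A_K: for every agent i and every T ∈ A_K, u_i(T, S_{-i}*) ≤ u_i(S_i*, S_{-i}*). -/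
open Set

/-- Auxiliary: the integral of a hockey-stick function. -/
lemma integral_kmax (K r b : ℝ) (h0 : 0 ≤ r) (hrb : r ≤ b) :
    ∫ p in (0:ℝ)..b, K * max (p - r) 0 = K * (b - r)^2 / 2 := by
  have hcont : Continuous fun p : ℝ => K * max (p - r) 0 :=
    continuous_const.mul ((continuous_id.sub continuous_const).max continuous_const)
  rw [← intervalIntegral.integral_add_adjacent_intervals (b := r)
      (hcont.intervalIntegrable 0 r) (hcont.intervalIntegrable r b)]
  have h1 : (∫ p in (0:ℝ)..r, K * max (p - r) 0) = 0 := by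
    rw [intervalIntegral.integral_congr (g := fun _ => (0:ℝ))]
    · simp
    · intro p hp
      rw [uIcc_of_le h0] at hp
      simp [max_eq_right (by linarith [hp.2] : p - r ≤ 0)]
  have h2 : (∫ p in r..b, K * max (p - r) 0) = K * (b-r)^2/2 := by
    rw [intervalIntegral.integral_congr (g := fun p => K * (p - r))]
    · rw [intervalIntegral.integral_const_mul,
        intervalIntegral.integral_comp_sub_right (fun x => x) r, integral_id]
      ring
    · intro p hp
      rw [uIcc_of_le hrb] at hp
      simp [max_eq_left (by linarith [hp.1] : (0:ℝ) ≤ p - r)]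
  rw [h1, h2]; ring

/-- Auxiliary: the key algebraic optimality inequality. -/
lemma core_ineq (a β P s q R : ℝ) (ha : 0 < a) (hβ : 0 < β) (hP : 0 ≤ P) (hq : 0 ≤ q)
    (hs : s * (1 + 2*a*β) = β * P) (hR : R ≤ s + β*(P - q)) :
    q*R - a*R^2 ≤ P*s - a*s^2 := by
  have hDpos : (0:ℝ) < 1 + 2*a*β := by positivity
  have hs0 : 0 ≤ s := by nlinarith [mul_nonneg hβ.le hP]
  rcases le_or_gt q (2*a*(s + β*(P - q))) with h | h
  · have h1 : 4*a*(q*R - a*R^2) ≤ q^2 := by nlinarith [sq_nonneg (q - 2*a*R)]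
    have e1 : s + β*P = 2*s*(1 + a*β) := by linear_combination -hs
    have h3 : q*(1+2*a*β) ≤ 4*a*s*(1+a*β) := by nlinarith
    have h4 : (q*(1+2*a*β))^2 ≤ (4*a*s*(1+a*β))^2 :=
      pow_le_pow_left₀ (mul_nonneg hq hDpos.le) h3 2
    have e2 : β*(P*s - a*s^2) = s^2*(1+a*β) := by linear_combination -s*hs
    have h6 : 16*a^2*β*s^2*(1+a*β)^2 ≤ 4*a*(1+2*a*β)^2*s^2*(1+a*β) := by
      nlinarith [mul_nonneg (mul_nonneg ha.le (sq_nonneg s)) (by positivity : (0:ℝ) ≤ 1+a*β)]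
    have e3 : 4*a*(1+2*a*β)^2*s^2*(1+a*β) = (4*a*(P*s - a*s^2))*(β*(1+2*a*β)^2) := by
      linear_combination -(4*a*(1+2*a*β)^2)*e2
    have h8 : q^2*(β*(1+2*a*β)^2) ≤ (4*a*(P*s - a*s^2))*(β*(1+2*a*β)^2) := by
      have h7 := mul_le_mul_of_nonneg_left h4 hβ.le
      nlinarith [h7, h6, e3]
    have h2 : q^2 ≤ 4*a*(P*s - a*s^2) :=
      le_of_mul_le_mul_right h8 (by positivity)
    exact le_of_mul_le_mul_left
      (by linarith : (4*a)*(q*R - a*R^2) ≤ (4*a)*(P*s - a*s^2)) (by positivity : (0:ℝ) < 4*a)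
  · have h1 : q*R - a*R^2 ≤ q*(s + β*(P-q)) - a*(s + β*(P-q))^2 := by
      nlinarith [mul_nonneg (sub_nonneg.2 hR) (by nlinarith : (0:ℝ) ≤ q - a*((s + β*(P-q)) + R))]
    have h2 : q*(s + β*(P-q)) - a*(s + β*(P-q))^2 ≤ P*s - a*s^2 := by
      nlinarith [sq_nonneg (P - q), mul_nonneg (mul_nonneg hβ.le (sq_nonneg (P-q))) (mul_pos ha hβ).le]
    linarith

set_option maxHeartbeats 1000000 in
/-- Main theorem: the pay-as-bid auction game with `K`-Lipschitz
feasible supply functions admits a Nash equilibrium in which each agent `i` plays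
the truncated-affine supply function `p ↦ K · max (p - pᵢ) 0`. -/
theorem stmt3 (n : ℕ) (N γ K : ℝ) (hN : 0 < N) (hγ : 0 < γ) (hK : 0 < K)
    (c : Fin n → ℝ) (hc : ∀ i, 0 ≤ c i) :
    ∃ pv : Fin n → ℝ, (∀ i, pv i ∈ Icc 0 (N / γ)) ∧
      ∀ i : Fin n, ∀ T, Feasible (N / γ) T → KLip (N / γ) K T →
        ∀ pstar q,
          Clears N γ (fun j => fun p => K * max (p - pv j) 0) pstar →
          Clears N γ (Function.update (fun j => fun p => K * max (p - pv j) 0) i T) q →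
          utility (c i) T q ≤ utility (c i) (fun p => K * max (p - pv i) 0) pstar := by
  classical
  rcases Nat.eq_zero_or_pos n with hn0 | hn
  · subst hn0
    exact ⟨Fin.elim0, fun i => i.elim0, fun i => i.elim0⟩
  have hn1 : (1:ℝ) ≤ (n:ℝ) := by exact_mod_cast hn
  set β : ℝ := γ + ((n:ℝ) - 1) * K with hβdef
  set a : Fin n → ℝ := fun j => 1/(2*K) + c j with hadef
  set d : Fin n → ℝ := fun j => 1 + 2 * a j * β with hddef
  set P : ℝ := N / (γ + β * ∑ j, 1 / d j) with hPdef
  set s : Fin n → ℝ := fun j => β * P / d j with hsdef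
  set pv : Fin n → ℝ := fun j => P - s j / K with hpvdef
  have hβ0 : 0 < β := by
    have h1 : (0:ℝ) ≤ ((n:ℝ) - 1) * K := mul_nonneg (by linarith) hK.le
    rw [hβdef]; linarith
  have ha0 : ∀ j, 0 < a j := fun j => add_pos_of_pos_of_nonneg (by positivity) (hc j)
  have hd0 : ∀ j, 0 < d j := fun j => by
    have := mul_pos (mul_pos two_pos (ha0 j)) hβ0
    rw [hddef]; dsimp only; linarith
  have hσ0 : 0 ≤ ∑ j, 1 / d j :=
    Finset.sum_nonneg fun j _ => (one_div_nonneg).2 (hd0 j).le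
  have hden : 0 < γ + β * ∑ j, 1 / d j := by positivity
  have hP0 : 0 < P := by rw [hPdef]; positivity
  have hPle : P ≤ N / γ := by
    rw [hPdef, div_le_div_iff₀ hden hγ]
    nlinarith [mul_nonneg hβ0.le hσ0]
  have hs0 : ∀ j, 0 ≤ s j := fun j => by
    rw [hsdef]; exact div_nonneg (mul_nonneg hβ0.le hP0.le) (hd0 j).le
  have hsd : ∀ j, s j * d j = β * P := fun j => by
    rw [hsdef]; exact div_mul_cancel₀ _ (hd0 j).ne'
  have hsK : ∀ j, s j ≤ K * P := fun j => by
    rw [hsdef]; dsimp only; rw [div_le_iff₀ (hd0 j)]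
    have h1 : 1 ≤ 2 * K * a j := by
      rw [hadef]; dsimp only; rw [mul_add]; field_simp
      nlinarith [mul_nonneg hK.le (hc j)]
    have h2 : β ≤ K * d j := by
      rw [hddef]; dsimp only
      nlinarith [mul_nonneg (sub_nonneg.2 h1) hβ0.le]
    nlinarith [hP0.le]
  have hclear : N - γ * P = ∑ j, s j := by
    have hsum : ∑ j, s j = β * P * ∑ j, 1 / d j := by
      rw [Finset.mul_sum]
      exact Finset.sum_congr rfl fun j _ => by rw [hsdef]; dsimp only; rw [mul_one_div]
    rw [hsum, hPdef]
    field_simp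
    ring
  have hpv0 : ∀ j, 0 ≤ pv j := fun j => by
    rw [hpvdef]; dsimp only
    rw [sub_nonneg, div_le_iff₀ hK]
    nlinarith [hsK j]
  have hpvP : ∀ j, pv j ≤ P := fun j => by
    rw [hpvdef]; dsimp only
    have := div_nonneg (hs0 j) hK.le; linarith
  have heqc : N - γ * P = ∑ j, K * max (P - pv j) 0 := by
    rw [hclear]
    refine Finset.sum_congr rfl fun j _ => ?_
    rw [hpvdef]; dsimp only
    rw [sub_sub_cancel, max_eq_left (div_nonneg (hs0 j) hK.le), mul_div_cancel₀ _ hK.ne']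
  have huniq : ∀ x y : ℝ, (N - γ * x = ∑ j, K * max (x - pv j) 0) →
      (N - γ * y = ∑ j, K * max (y - pv j) 0) → x = y := by
    have hmono : ∀ x y : ℝ, x ≤ y →
        (∑ j, K * max (x - pv j) 0) ≤ ∑ j, K * max (y - pv j) 0 := fun x y hxy =>
      Finset.sum_le_sum fun j _ =>
        mul_le_mul_of_nonneg_left (max_le_max (by linarith) le_rfl) hK.le
    intro x y hx hy
    rcases lt_trichotomy x y with h | h | h
    · exfalso; have := hmono x y h.le; nlinarith
    · exact h
    · exfalso; have := hmono y x h.le; nlinarith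
  refine ⟨pv, fun i => ⟨hpv0 i, (hpvP i).trans hPle⟩, ?_⟩
  intro i T hF hL pstar q hCe hCd
  obtain ⟨hTc, hTm, hT0⟩ := hF
  have hphat0 : (0:ℝ) ≤ N / γ := by positivity
  have h0mem : (0:ℝ) ∈ Icc (0:ℝ) (N/γ) := ⟨le_rfl, hphat0⟩
  have hpe : N - γ * pstar = ∑ j, K * max (pstar - pv j) 0 := hCe.2
  have hPeq : pstar = P := huniq pstar P hpe heqc
  have hq : q ∈ Icc (0:ℝ) (N/γ) := hCd.1
  -- express T q via the residual demand
  have hupdate : ∀ j : Fin n, Function.update (fun j => fun p => K * max (p - pv j) 0) i T j q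
      = if j = i then T q else K * max (q - pv j) 0 := by
    intro j
    by_cases hji : j = i
    · subst hji; rw [Function.update_self, if_pos rfl]
    · rw [Function.update_of_ne hji, if_neg hji]
  have hTqe : T q = N - γ * q - ∑ j ∈ Finset.univ.erase i, K * max (q - pv j) 0 := by
    have h1 : N - γ * q = ∑ j, (if j = i then T q else K * max (q - pv j) 0) := by
      rw [hCd.2]; exact Finset.sum_congr rfl fun j _ => hupdate j
    rw [← Finset.add_sum_erase _ _ (Finset.mem_univ i), if_pos rfl] at h1
    have h2 : ∑ j ∈ Finset.univ.erase i, (if j = i then T q else K * max (q - pv j) 0)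
        = ∑ j ∈ Finset.univ.erase i, K * max (q - pv j) 0 :=
      Finset.sum_congr rfl fun j hj => if_neg (Finset.ne_of_mem_erase hj)
    rw [h2] at h1; linarith
  have hcard : ((Finset.univ.erase i).card : ℝ) = (n:ℝ) - 1 := by
    rw [Finset.card_erase_of_mem (Finset.mem_univ i), Finset.card_univ, Fintype.card_fin,
      Nat.cast_sub hn]
    simp
  have hsume : ∑ j ∈ Finset.univ.erase i, s j = (∑ j, s j) - s i := by
    rw [← Finset.add_sum_erase _ s (Finset.mem_univ i)]
    ring
  have hlin : ∑ j ∈ Finset.univ.erase i, K * (q - pv j)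
      = ((n:ℝ)-1) * (K*q - K*P) + ((∑ j, s j) - s i) := by
    have hterm : ∀ j, K * (q - pv j) = (K*q - K*P) + s j := by
      intro j; rw [hpvdef]; dsimp only
      field_simp
      ring
    rw [Finset.sum_congr rfl fun j _ => hterm j, Finset.sum_add_distrib, Finset.sum_const,
      hsume, nsmul_eq_mul, hcard]
  have hle : (∑ j ∈ Finset.univ.erase i, K * (q - pv j))
      ≤ ∑ j ∈ Finset.univ.erase i, K * max (q - pv j) 0 :=
    Finset.sum_le_sum fun j _ => mul_le_mul_of_nonneg_left (le_max_left _ _) hK.le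
  have hβPq : β * (P - q) = γ*(P-q) + ((n:ℝ)-1)*(K*P - K*q) := by rw [hβdef]; ring
  have hRu : T q ≤ s i + β * (P - q) := by
    rw [hTqe]
    linarith [hle, hlin, hclear, hβPq]
  have hR0 : 0 ≤ T q := by
    have := hTm h0mem hq hq.1
    rw [hT0] at this; exact this
  have hRK : T q ≤ K * q := by
    have h1 := hL q hq 0 h0mem
    rw [hT0, sub_zero, sub_zero] at h1
    calc T q ≤ |T q| := le_abs_self _
      _ ≤ K * |q| := h1
      _ = K * q := by rw [abs_of_nonneg hq.1]
  -- lower bound on the deviator's payment integral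
  have hr0 : 0 ≤ q - T q / K := by rw [sub_nonneg, div_le_iff₀ hK]; linarith [hRK]
  have hrq : q - T q / K ≤ q := by have := div_nonneg hR0 hK.le; linarith
  have hIr : ∫ p in (0:ℝ)..q, K * max (p - (q - T q / K)) 0 = T q^2/(2*K) := by
    rw [integral_kmax K _ q hr0 hrq]
    have h1 : q - (q - T q / K) = T q / K := by ring
    rw [h1]; field_simp
  have hTcq : ContinuousOn T (Icc 0 q) := hTc.mono (Icc_subset_Icc le_rfl hq.2)
  have hint : T q^2/(2*K) ≤ ∫ p in (0:ℝ)..q, T p := by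
    rw [← hIr]
    apply intervalIntegral.integral_mono_on hq.1
    · exact (continuous_const.mul ((continuous_id.sub continuous_const).max
        continuous_const)).intervalIntegrable 0 q
    · exact ContinuousOn.intervalIntegrable (by rwa [uIcc_of_le hq.1])
    · intro p hp
      rcases le_or_gt (p - (q - T q / K)) 0 with hpr | hpr
      · rw [max_eq_right hpr, mul_zero]
        have hpmem : p ∈ Icc (0:ℝ) (N/γ) := ⟨hp.1, hp.2.trans hq.2⟩
        have := hTm h0mem hpmem hp.1
        rw [hT0] at this; exact this
      · rw [max_eq_left hpr.le]
        have hpmem : p ∈ Icc (0:ℝ) (N/γ) := ⟨hp.1, hp.2.trans hq.2⟩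
        have h1 := hL q hq p hpmem
        rw [abs_of_nonneg (by linarith [hp.2] : (0:ℝ) ≤ q - p)] at h1
        have h2 : T q - T p ≤ K * (q - p) := by
          have := le_abs_self (T q - T p)
          linarith
        have h3 : K * (p - (q - T q / K)) = K*p - K*q + T q := by field_simp; ring
        linarith
  -- equilibrium-side computation
  have hmaxi : K * max (P - pv i) 0 = s i := by
    rw [hpvdef]; dsimp only
    rw [sub_sub_cancel, max_eq_left (div_nonneg (hs0 i) hK.le), mul_div_cancel₀ _ hK.ne']
  have hIeq : ∫ p in (0:ℝ)..P, K * max (p - pv i) 0 = s i^2/(2*K) := by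
    rw [integral_kmax K (pv i) P (hpv0 i) (hpvP i)]
    have h1 : P - pv i = s i / K := by rw [hpvdef]; dsimp only; ring
    rw [h1]; field_simp
  have hRHS : utility (c i) (fun p => K * max (p - pv i) 0) pstar
      = P * s i - s i^2/(2*K) - c i * s i^2 := by
    rw [hPeq]; simp only [utility]
    rw [hIeq, hmaxi]
  have hsrel : s i * (1 + 2*(1/(2*K) + c i)*β) = β * P := by
    have h := hsd i
    rw [hddef] at h; dsimp only at h
    rw [hadef] at h; dsimp only at h
    exact h
  have ha0' : 0 < 1/(2*K) + c i := add_pos_of_pos_of_nonneg (by positivity) (hc i)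
  have hcore := core_ineq (1/(2*K) + c i) β P (s i) q (T q) ha0' hβ0 hP0.le hq.1 hsrel hRu
  have hLHS : utility (c i) T q = q * T q - (∫ p in (0:ℝ)..q, T p) - c i * T q^2 := rfl
  rw [hLHS, hRHS]
  have hexp1 : (1/(2*K) + c i) * T q^2 = T q^2/(2*K) + c i * T q^2 := by ring
  have hexp2 : (1/(2*K) + c i) * s i^2 = s i^2/(2*K) + c i * s i^2 := by ring
  linarith [hcore, hint, hexp1, hexp2]
end

section
/- Let p* > 0 and let S : [0, p*] → ℝ be continuous, nondecreasing with S(0) = 0. If there exists p_0 ∈ (0, p*) with S(p_0) > 0, then ∫_0^{p*} S(p²/p*) dp < ∫_0^{p*} S(p) dp. -/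
open Set

/-- if the continuous nondecreasing function `S` with `S 0 = 0` is
strictly positive somewhere in `(0, p*)`, then `∫₀^{p*} S(p²/p*) dp < ∫₀^{p*} S(p) dp`. -/
theorem stmt9 (pstar : ℝ) (hp : 0 < pstar) (S : ℝ → ℝ)
    (hcont : ContinuousOn S (Icc 0 pstar))
    (hmono : MonotoneOn S (Icc 0 pstar))
    (h0 : S 0 = 0)
    (p0 : ℝ) (hp0 : p0 ∈ Ioo 0 pstar) (hS0 : 0 < S p0) :
    (∫ p in (0:ℝ)..pstar, S (p ^ 2 / pstar)) < ∫ p in (0:ℝ)..pstar, S p := by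
  obtain ⟨hp0l, hp0r⟩ := hp0
  -- p²/pstar maps Icc 0 pstar into itself and is ≤ p there.
  have hmaps : ∀ x ∈ Icc 0 pstar, x ^ 2 / pstar ∈ Icc 0 pstar := by
    intro x hx
    constructor
    · positivity
    · rw [div_le_iff₀ hp]
      nlinarith [hx.1, hx.2]
  have hle : ∀ x ∈ Icc 0 pstar, x ^ 2 / pstar ≤ x := by
    intro x hx
    rw [div_le_iff₀ hp]
    nlinarith [hx.1, hx.2]
  -- find a point c with strict inequality, via infimum of {x : S x ≥ y}
  set y := S p0 / 2 with hy
  have hy0 : 0 < y := by positivity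
  have hyp0 : y < S p0 := by linarith
  set T := {x : ℝ | x ∈ Icc 0 p0 ∧ y ≤ S x} with hT
  have hTne : T.Nonempty := ⟨p0, ⟨le_of_lt hp0l, le_refl p0⟩, hyp0.le⟩
  have hTbdd : BddBelow T := ⟨0, fun x hx => hx.1.1⟩
  set c := sInf T with hc
  have hsub : Icc (0:ℝ) p0 ⊆ Icc 0 pstar := Icc_subset_Icc le_rfl hp0r.le
  have hTclosed : IsClosed T := by
    have : T = Icc 0 p0 ∩ S ⁻¹' Ici y := by
      ext x; simp [hT, and_comm]
    rw [this]
    exact ((hcont.mono hsub).preimage_isClosed_of_isClosed isClosed_Icc isClosed_Ici)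
  have hcT : c ∈ T := hTclosed.csInf_mem hTne hTbdd
  have hcp0 : c ≤ p0 := hcT.1.2
  have hc0 : 0 ≤ c := hcT.1.1
  -- c > 0 : S is < y near 0
  have hcpos : 0 < c := by
    rcases lt_or_eq_of_le hc0 with h | h
    · exact h
    · exfalso
      have : S c = 0 := by rw [← h, h0]
      have := hcT.2
      linarith [this, hy0]
  have hcIcc : c ∈ Icc 0 pstar := ⟨hc0, hcp0.trans hp0r.le⟩
  have hclt : c ^ 2 / pstar < c := by
    rw [div_lt_iff₀ hp]
    nlinarith
  have hc2Icc : c ^ 2 / pstar ∈ Icc 0 p0 :=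
    ⟨by positivity, hclt.le.trans hcp0⟩
  have hnotT : c ^ 2 / pstar ∉ T := fun h => absurd (csInf_le hTbdd h) (not_le.mpr hclt)
  have hstrict : S (c ^ 2 / pstar) < S c := by
    have h1 : S (c ^ 2 / pstar) < y := by
      by_contra h
      exact hnotT ⟨hc2Icc, not_lt.mp h⟩
    linarith [hcT.2]
  -- main inequality
  refine intervalIntegral.integral_lt_integral_of_continuousOn_of_le_of_exists_lt hp
    ?_ hcont ?_ ⟨c, hcIcc, hstrict⟩
  · exact hcont.comp (by fun_prop) hmaps
  · intro x hx
    have hx' : x ∈ Icc 0 pstar := ⟨hx.1.le, hx.2⟩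
    exact hmono (hmaps x hx') hx' (hle x hx')
end

section
/- Assume N ≥ 0, γ > 0, p̂ = N/γ, K > 0. The map φ : [0, p̂]^n → [0, p̂] that sends (p_1, …, p_n) to the unique p ∈ [0, p̂] satisfying N − γ p = Σ_{i=1}^n K·max(p − p_i, 0) is continuous. -/
open Set

lemma stmt11_term (p q t s : ℝ) :
    (q - p) * (max (p - t) 0 - max (q - s) 0) ≤ |q - p| * |t - s| := by
  have h1 : (q - p) * (max (p - t) 0 - max (q - t) 0) ≤ 0 := by
    rcases le_total p q with h | h
    · have : max (p - t) 0 ≤ max (q - t) 0 := max_le_max (by linarith) le_rfl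
      nlinarith
    · have : max (q - t) 0 ≤ max (p - t) 0 := max_le_max (by linarith) le_rfl
      nlinarith
  have h2 : |max (q - t) 0 - max (q - s) 0| ≤ |t - s| := by
    have := abs_max_sub_max_le_abs (q - t) (q - s) 0
    have h3 : |(q - t) - (q - s)| = |t - s| := by
      rw [show (q - t) - (q - s) = -(t - s) by ring, abs_neg]
    linarith
  have h4 : (q - p) * (max (q - t) 0 - max (q - s) 0) ≤ |q - p| * |t - s| :=
    calc (q - p) * (max (q - t) 0 - max (q - s) 0)
        ≤ |(q - p) * (max (q - t) 0 - max (q - s) 0)| := le_abs_self _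
      _ = |q - p| * |max (q - t) 0 - max (q - s) 0| := abs_mul _ _
      _ ≤ |q - p| * |t - s| := by
          exact mul_le_mul_of_nonneg_left h2 (abs_nonneg _)
  nlinarith [h1, h4]

/-- the clearing-price map of truncated-affine profiles is continuous
on `[0, p̂]ⁿ`. -/
theorem stmt11 (n : ℕ) (N γ K : ℝ) (hN : 0 ≤ N) (hγ : 0 < γ) (hK : 0 < K)
    (φ : (Fin n → ℝ) → ℝ)
    (hφ : ∀ pv : Fin n → ℝ, (∀ i, pv i ∈ Icc 0 (N / γ)) →
      φ pv ∈ Icc 0 (N / γ) ∧ N - γ * φ pv = ∑ i, K * max (φ pv - pv i) 0) :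
    ContinuousOn φ {pv : Fin n → ℝ | ∀ i, pv i ∈ Icc 0 (N / γ)} := by
  have key : ∀ pv qv : Fin n → ℝ, (∀ i, pv i ∈ Icc 0 (N / γ)) →
      (∀ i, qv i ∈ Icc 0 (N / γ)) →
      |φ pv - φ qv| ≤ (K / γ) * ∑ i, |pv i - qv i| := by
    intro pv qv hpv hqv
    obtain ⟨_, E1⟩ := hφ pv hpv
    obtain ⟨_, E2⟩ := hφ qv hqv
    set p := φ pv with hp
    set q := φ qv with hq
    have hdiff : γ * (q - p) =
        ∑ i, (K * max (p - pv i) 0 - K * max (q - qv i) 0) := by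
      rw [Finset.sum_sub_distrib]
      linarith
    have hsum : (q - p) * (γ * (q - p)) ≤
        ∑ i, K * (|q - p| * |pv i - qv i|) := by
      rw [hdiff, Finset.mul_sum]
      apply Finset.sum_le_sum
      intro i _
      have := stmt11_term p q (pv i) (qv i)
      nlinarith [this]
    have hS : ∑ i, K * (|q - p| * |pv i - qv i|) =
        K * |q - p| * ∑ i, |pv i - qv i| := by
      rw [Finset.mul_sum]; ring_nf
    rw [hS] at hsum
    have hSnn : (0:ℝ) ≤ ∑ i, |pv i - qv i| :=
      Finset.sum_nonneg fun i _ => abs_nonneg _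
    rcases eq_or_lt_of_le (abs_nonneg (q - p)) with h0 | h0
    · rw [abs_sub_comm, ← h0]
      positivity
    · have habs : γ * |q - p| ^ 2 ≤ K * |q - p| * ∑ i, |pv i - qv i| := by
        have : (q - p) * (γ * (q - p)) = γ * |q - p| ^ 2 := by
          rw [sq_abs]; ring
        linarith [this ▸ hsum]
      have : γ * |q - p| ≤ K * ∑ i, |pv i - qv i| := by
        nlinarith
      rw [abs_sub_comm]
      rw [div_mul_eq_mul_div, le_div_iff₀ hγ]
      linarith
  have lip : LipschitzOnWith (Real.toNNReal (n * K / γ)) φ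
      {pv : Fin n → ℝ | ∀ i, pv i ∈ Icc 0 (N / γ)} := by
    apply LipschitzOnWith.of_dist_le_mul
    intro pv hpv qv hqv
    rw [Real.coe_toNNReal _ (by positivity), Real.dist_eq]
    have h1 := key pv qv hpv hqv
    have h2 : ∑ i, |pv i - qv i| ≤ n * dist pv qv := by
      calc ∑ i, |pv i - qv i| ≤ ∑ _i : Fin n, dist pv qv := by
            apply Finset.sum_le_sum
            intro i _
            rw [← Real.dist_eq]
            exact dist_le_pi_dist pv qv i
        _ = n * dist pv qv := by
            rw [Finset.sum_const, Finset.card_univ, Fintype.card_fin]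
            simp [nsmul_eq_mul]
    calc |φ pv - φ qv| ≤ (K / γ) * ∑ i, |pv i - qv i| := h1
      _ ≤ (K / γ) * (n * dist pv qv) := by
          apply mul_le_mul_of_nonneg_left h2 (by positivity)
      _ = n * K / γ * dist pv qv := by ring
  exact lip.continuousOn
end

section
/- Assume N ≥ 0, γ > 0, p̂ = N/γ, K > 0. The map φ : [0, p̂]^n → [0, p̂] that sends (p_1, …, p_n) to the unique p ∈ [0, p̂] satisfying N − γ p = Σ_{i=1}^n K·max(p − p_i, 0) is componentwise nondecreasing: if p_i ≤ p_i' for every i, then φ(p_1, …, p_n) ≤ φ(p_1', …, p_n'). -/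
open Set

/-- the clearing-price map of truncated-affine profiles is
componentwise nondecreasing on `[0, p̂]ⁿ`. -/
theorem stmt12 (n : ℕ) (N γ K : ℝ) (hN : 0 ≤ N) (hγ : 0 < γ) (hK : 0 < K)
    (φ : (Fin n → ℝ) → ℝ)
    (hφ : ∀ pv : Fin n → ℝ, (∀ i, pv i ∈ Icc 0 (N / γ)) →
      φ pv ∈ Icc 0 (N / γ) ∧ N - γ * φ pv = ∑ i, K * max (φ pv - pv i) 0) :
    ∀ pv pv' : Fin n → ℝ, (∀ i, pv i ∈ Icc 0 (N / γ)) → (∀ i, pv' i ∈ Icc 0 (N / γ)) →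
      (∀ i, pv i ≤ pv' i) → φ pv ≤ φ pv' := by
  intro pv pv' hpv hpv' hle
  obtain ⟨_, heq⟩ := hφ pv hpv
  obtain ⟨_, heq'⟩ := hφ pv' hpv'
  by_contra h
  push_neg at h
  have hsum : ∑ i, K * max (φ pv' - pv' i) 0 ≤ ∑ i, K * max (φ pv - pv i) 0 := by
    apply Finset.sum_le_sum
    intro i _
    apply mul_le_mul_of_nonneg_left _ hK.le
    exact max_le_max (by linarith [hle i]) le_rfl
  nlinarith
end

section
/- Assume N ≥ 0, γ > 0, p̂ = N/γ, K > 0, c_i ≥ 0. The restricted utility u_i^r : [0, p̂]^n → ℝ defined by u_i^r(p_1, …, p_n) = φ·K·max(φ − p_i, 0) − (K·max(φ − p_i, 0))²/(2K) − c_i·(K·max(φ − p_i, 0))², where φ = φ(p_1, …, p_n) is the clearing price of the truncated-affine profile, is continuous on [0, p̂]^n. -/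
open Set

/-- Restricted pay-as-bid utility at clearing price `phi` and own parameter `q`:
`φ·K[φ-q]₊ - (K[φ-q]₊)²/(2K) - c·(K[φ-q]₊)²`. -/
noncomputable def uir (K c phi q : ℝ) : ℝ :=
  phi * (K * max (phi - q) 0) - (K * max (phi - q) 0) ^ 2 / (2 * K)
    - c * (K * max (phi - q) 0) ^ 2

/-- the restricted utility `u_i^r` is continuous on `[0, p̂]ⁿ`. -/
theorem stmt13 (n : ℕ) (N γ K c : ℝ) (hN : 0 ≤ N) (hγ : 0 < γ) (hK : 0 < K) (hc : 0 ≤ c)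
    (i : Fin n) (φ : (Fin n → ℝ) → ℝ)
    (hφ : ∀ pv : Fin n → ℝ, (∀ j, pv j ∈ Icc 0 (N / γ)) →
      φ pv ∈ Icc 0 (N / γ) ∧ N - γ * φ pv = ∑ j, K * max (φ pv - pv j) 0) :
    ContinuousOn (fun pv => uir K c (φ pv) (pv i))
      {pv : Fin n → ℝ | ∀ j, pv j ∈ Icc 0 (N / γ)} := by
  set S := {pv : Fin n → ℝ | ∀ j, pv j ∈ Icc 0 (N / γ)} with hS
  -- One-sided Lipschitz estimate for φ
  have key : ∀ pv ∈ S, ∀ qv ∈ S, φ pv - φ qv ≤ (n * K / γ) * dist pv qv := by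
    intro pv hpv qv hqv
    rcases le_or_gt (φ pv) (φ qv) with hle | hlt
    · have h1 : (0:ℝ) ≤ (n * K / γ) * dist pv qv := by
        apply mul_nonneg
        · positivity
        · exact dist_nonneg
      linarith
    · have e1 := (hφ pv hpv).2
      have e2 := (hφ qv hqv).2
      have hsum : γ * (φ pv - φ qv)
          = ∑ j, (K * max (φ qv - qv j) 0 - K * max (φ pv - pv j) 0) := by
        rw [Finset.sum_sub_distrib, ← e1, ← e2]; ring
      have hbound : ∀ j : Fin n,
          K * max (φ qv - qv j) 0 - K * max (φ pv - pv j) 0 ≤ K * dist pv qv := by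
        intro j
        have hm1 : max (φ qv - qv j) 0 ≤ max (φ pv - qv j) 0 := by
          apply max_le_max _ le_rfl
          linarith
        have hm2 : max (φ pv - qv j) 0 - max (φ pv - pv j) 0 ≤ |pv j - qv j| := by
          have := abs_max_sub_max_le_abs (φ pv - qv j) (φ pv - pv j) 0
          have h2 : |(φ pv - qv j) - (φ pv - pv j)| = |pv j - qv j| := by
            rw [show (φ pv - qv j) - (φ pv - pv j) = pv j - qv j by ring]
          rw [h2] at this
          calc max (φ pv - qv j) 0 - max (φ pv - pv j) 0
              ≤ |max (φ pv - qv j) 0 - max (φ pv - pv j) 0| := le_abs_self _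
            _ ≤ |pv j - qv j| := this
        have hd : |pv j - qv j| ≤ dist pv qv := by
          have := dist_le_pi_dist pv qv j
          rwa [Real.dist_eq] at this
        nlinarith [hK.le]
      have hsum2 : γ * (φ pv - φ qv) ≤ ∑ _j : Fin n, K * dist pv qv := by
        rw [hsum]; exact Finset.sum_le_sum fun j _ => hbound j
      have hsum3 : (∑ _j : Fin n, K * dist pv qv) = n * K * dist pv qv := by
        rw [Finset.sum_const, Finset.card_fin]; ring
      rw [hsum3] at hsum2
      rw [div_mul_eq_mul_div, le_div_iff₀ hγ]
      nlinarith
  -- Continuity of φ on S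
  have hφcont : ContinuousOn φ S := by
    intro pv hpv
    rw [Metric.continuousWithinAt_iff]
    intro ε hε
    refine ⟨ε / (n * K / γ + 1), by positivity, fun qv hqv hd => ?_⟩
    have h1 := key pv hpv qv hqv
    have h2 := key qv hqv pv hpv
    rw [dist_comm pv qv] at h1
    rw [Real.dist_eq, abs_sub_lt_iff]
    have hC : (0:ℝ) ≤ n * K / γ := by positivity
    have hd' : dist qv pv < ε / (n * K / γ + 1) := hd
    have hdn : (0:ℝ) ≤ dist qv pv := dist_nonneg
    have hmul : (n * K / γ) * dist qv pv < ε := by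
      calc (n * K / γ) * dist qv pv ≤ (n * K / γ + 1) * dist qv pv := by nlinarith
        _ < (n * K / γ + 1) * (ε / (n * K / γ + 1)) := by
            apply mul_lt_mul_of_pos_left hd'; positivity
        _ = ε := by field_simp
    constructor <;> linarith
  -- Assemble continuity of uir composition
  have h2 : ContinuousOn (fun pv : Fin n → ℝ => pv i) S := (continuous_apply i).continuousOn
  have hg : ContinuousOn (fun pv => K * max (φ pv - pv i) 0) S :=
    continuousOn_const.mul ((hφcont.sub h2).sup continuousOn_const)
  simp only [uir]
  exact ((hφcont.mul hg).sub ((hg.pow 2).div_const (2 * K))).sub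
    (continuousOn_const.mul (hg.pow 2))
end

section
/- Assume N > 0, γ > 0, p̂ = N/γ, K > 0, c_i ≥ 0, and fix p_j ∈ [0, p̂] for all j ≠ i. Then the function p_i ↦ u_i^r(p_i, p_{-i}) is quasiconcave on [0, p̂]: for every c ∈ ℝ, the superlevel set {p_i ∈ [0, p̂] : u_i^r(p_i, p_{-i}) ≥ c} is convex (an interval). -/
open Set

set_option maxHeartbeats 1000000 in
/-- for fixed strategies of the other agents, `p_i ↦ u_i^r(p_i, p_{-i})`
is quasiconcave on `[0, p̂]`: every superlevel set is convex. -/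
theorem stmt14 (n : ℕ) (N γ K c : ℝ) (hN : 0 < N) (hγ : 0 < γ) (hK : 0 < K) (hc : 0 ≤ c)
    (i : Fin n) (pv : Fin n → ℝ) (hpv : ∀ j, pv j ∈ Icc 0 (N / γ))
    (φ : (Fin n → ℝ) → ℝ)
    (hφ : ∀ x : Fin n → ℝ, (∀ j, x j ∈ Icc 0 (N / γ)) →
      φ x ∈ Icc 0 (N / γ) ∧ N - γ * φ x = ∑ j, K * max (φ x - x j) 0) :
    ∀ lvl : ℝ,
      Convex ℝ {t : ℝ | t ∈ Icc 0 (N / γ) ∧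
        lvl ≤ uir K c (φ (Function.update pv i t)) t} := by
  intro lvl
  -- the "other agents" supply function
  set S : ℝ → ℝ := fun p => ∑ j ∈ Finset.univ.erase i, K * max (p - pv j) 0 with hSdef
  have hSmono : ∀ p q : ℝ, p ≤ q → S p ≤ S q := by
    intro p q hpq
    refine Finset.sum_le_sum fun j _ => ?_
    exact mul_le_mul_of_nonneg_left (max_le_max (by linarith) le_rfl) hK.le
  have hSconv : ∀ a b p q : ℝ, 0 ≤ a → 0 ≤ b → a + b = 1 →
      S (a * p + b * q) ≤ a * S p + b * S q := by
    intro a b p q ha hb hab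
    simp only [hSdef, Finset.mul_sum, ← Finset.sum_add_distrib]
    refine Finset.sum_le_sum fun j _ => ?_
    have h1 : a * p + b * q - pv j = a * (p - pv j) + b * (q - pv j) := by
      linear_combination pv j * hab
    rw [h1]
    have h2 : a * (p - pv j) + b * (q - pv j)
        ≤ a * max (p - pv j) 0 + b * max (q - pv j) 0 := by
      gcongr <;> exact le_max_left _ _
    have h3 : max (a * (p - pv j) + b * (q - pv j)) 0
        ≤ a * max (p - pv j) 0 + b * max (q - pv j) 0 := by
      refine max_le h2 (by positivity)
    calc K * max (a * (p - pv j) + b * (q - pv j)) 0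
        ≤ K * (a * max (p - pv j) 0 + b * max (q - pv j) 0) :=
          mul_le_mul_of_nonneg_left h3 hK.le
      _ = a * (K * max (p - pv j) 0) + b * (K * max (q - pv j) 0) := by ring
  -- the clearing equation, split
  have hEq : ∀ t : ℝ, t ∈ Icc (0:ℝ) (N / γ) →
      N - γ * φ (Function.update pv i t) =
        K * max (φ (Function.update pv i t) - t) 0 + S (φ (Function.update pv i t)) := by
    intro t ht
    have hx : ∀ j, Function.update pv i t j ∈ Icc (0:ℝ) (N / γ) := by
      intro j
      rcases eq_or_ne j i with rfl | hj
      · simpa using ht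
      · simpa [Function.update_of_ne hj] using hpv j
    obtain ⟨-, heq⟩ := hφ _ hx
    rw [heq, ← Finset.add_sum_erase _ _ (Finset.mem_univ i)]
    simp only [Function.update_self]
    congr 1
    refine Finset.sum_congr rfl fun j hj => ?_
    rw [Function.update_of_ne (Finset.ne_of_mem_erase hj)]
  -- monotonicity of φ and antitonicity of the dispatched quantity
  have hmono : ∀ s t : ℝ, s ∈ Icc (0:ℝ) (N / γ) → t ∈ Icc (0:ℝ) (N / γ) → s ≤ t →
      φ (Function.update pv i s) ≤ φ (Function.update pv i t) ∧
      K * max (φ (Function.update pv i t) - t) 0 ≤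
        K * max (φ (Function.update pv i s) - s) 0 := by
    intro s t hs ht hst
    set φs := φ (Function.update pv i s) with hφs
    set φt := φ (Function.update pv i t) with hφt
    have hes := hEq s hs
    have het := hEq t ht
    have h1 : φs ≤ φt := by
      by_contra h
      push_neg at h
      have hS' : S φt ≤ S φs := hSmono _ _ h.le
      have hQ : K * max (φt - t) 0 ≤ K * max (φs - s) 0 :=
        mul_le_mul_of_nonneg_left (max_le_max (by linarith) le_rfl) hK.le
      nlinarith [mul_lt_mul_of_pos_left h hγ]
    refine ⟨h1, ?_⟩
    have h2 := hSmono _ _ h1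
    nlinarith [mul_le_mul_of_nonneg_left h1 hγ.le]
  -- key quasiconcavity step
  have hkey : ∀ t₁ t₂ t : ℝ, t₁ ∈ Icc (0:ℝ) (N / γ) → t₂ ∈ Icc (0:ℝ) (N / γ) →
      t₁ ≤ t → t ≤ t₂ →
      lvl ≤ uir K c (φ (Function.update pv i t₁)) t₁ →
      lvl ≤ uir K c (φ (Function.update pv i t₂)) t₂ →
      lvl ≤ uir K c (φ (Function.update pv i t)) t := by
    intro t₁ t₂ t h1m h2m h1t ht2 hu1 hu2
    have htm : t ∈ Icc (0:ℝ) (N / γ) := ⟨le_trans h1m.1 h1t, le_trans ht2 h2m.2⟩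
    have he1 := hEq t₁ h1m
    have he2 := hEq t₂ h2m
    have het := hEq t htm
    obtain ⟨hφ1t, hQt1⟩ := hmono t₁ t h1m htm h1t
    obtain ⟨hφt2, hQ2t⟩ := hmono t t₂ htm h2m ht2
    simp only [uir] at hu1 hu2 ⊢
    set φ₁ := φ (Function.update pv i t₁) with hd1
    set φ₂ := φ (Function.update pv i t₂) with hd2
    set φₜ := φ (Function.update pv i t) with hdt
    set Q₁ := K * max (φ₁ - t₁) 0 with hQ1
    set Q₂ := K * max (φ₂ - t₂) 0 with hQ2
    set Q := K * max (φₜ - t) 0 with hQd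
    have hQnonneg : 0 ≤ Q := mul_nonneg hK.le (le_max_right _ _)
    have hφ12 : φ₁ ≤ φ₂ := le_trans hφ1t hφt2
    have hQ21 : Q₂ ≤ Q₁ := le_trans hQ2t hQt1
    -- choose μ with Q = μ Q₁ + (1-μ) Q₂
    obtain ⟨μ, hμ0, hμ1, hμQ⟩ : ∃ μ : ℝ, 0 ≤ μ ∧ μ ≤ 1 ∧ Q = μ * Q₁ + (1 - μ) * Q₂ := by
      rcases eq_or_lt_of_le hQ21 with heq | hlt
      · exact ⟨1, zero_le_one, le_rfl, by rw [← heq]; linarith⟩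
      · refine ⟨(Q - Q₂) / (Q₁ - Q₂), div_nonneg (by linarith) (by linarith), ?_, ?_⟩
        · rw [div_le_one (by linarith)]; linarith
        · have h := div_mul_cancel₀ (Q - Q₂) (sub_ne_zero.2 (ne_of_gt hlt))
          linear_combination -h
    -- concavity of the inverse supply: φₜ lies above the chord
    have hchord : μ * φ₁ + (1 - μ) * φ₂ ≤ φₜ := by
      by_contra h
      push_neg at h
      have hc1 : S (μ * φ₁ + (1 - μ) * φ₂) ≤ μ * S φ₁ + (1 - μ) * S φ₂ :=
        hSconv μ (1 - μ) φ₁ φ₂ hμ0 (by linarith) (by ring)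
      have hc2 : S φₜ ≤ S (μ * φ₁ + (1 - μ) * φ₂) := hSmono _ _ h.le
      have hγφ : γ * φₜ < γ * (μ * φ₁ + (1 - μ) * φ₂) := mul_lt_mul_of_pos_left h hγ
      have hS1 : μ * (N - γ * φ₁) = μ * (Q₁ + S φ₁) := by rw [he1]
      have hS2 : (1 - μ) * (N - γ * φ₂) = (1 - μ) * (Q₂ + S φ₂) := by rw [he2]
      nlinarith [hS1, hS2, het, hμQ, hc1, hc2, hγφ]
    -- final algebra
    rw [div_eq_mul_inv] at hu1 hu2 ⊢
    set r := (2 * K)⁻¹ with hrdef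
    have hrpos : 0 < r := inv_pos.2 (by linarith)
    have identity : φₜ * Q - Q ^ 2 * r - c * Q ^ 2
        - (μ * (φ₁ * Q₁ - Q₁ ^ 2 * r - c * Q₁ ^ 2)
            + (1 - μ) * (φ₂ * Q₂ - Q₂ ^ 2 * r - c * Q₂ ^ 2))
        = (φₜ - (μ * φ₁ + (1 - μ) * φ₂)) * Q
            + μ * (1 - μ) * ((φ₂ - φ₁) * (Q₁ - Q₂) + (r + c) * (Q₁ - Q₂) ^ 2) := by
      rw [hμQ]; ring
    have e1 : 0 ≤ (φₜ - (μ * φ₁ + (1 - μ) * φ₂)) * Q :=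
      mul_nonneg (by linarith) hQnonneg
    have e2 : 0 ≤ μ * (1 - μ) * ((φ₂ - φ₁) * (Q₁ - Q₂) + (r + c) * (Q₁ - Q₂) ^ 2) :=
      mul_nonneg (mul_nonneg hμ0 (by linarith))
        (add_nonneg (mul_nonneg (by linarith) (by linarith))
          (mul_nonneg (by linarith) (sq_nonneg _)))
    have e3 : μ * lvl ≤ μ * (φ₁ * Q₁ - Q₁ ^ 2 * r - c * Q₁ ^ 2) :=
      mul_le_mul_of_nonneg_left hu1 hμ0
    have e4 : (1 - μ) * lvl ≤ (1 - μ) * (φ₂ * Q₂ - Q₂ ^ 2 * r - c * Q₂ ^ 2) :=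
      mul_le_mul_of_nonneg_left hu2 (by linarith)
    nlinarith [identity, e1, e2, e3, e4]
  intro x hx y hy a b ha hb hab
  simp only [mem_setOf_eq, smul_eq_mul] at hx hy ⊢
  have hx1 := hx.1
  have hy1 := hy.1
  have hNx : a * (N / γ) + b * (N / γ) = N / γ := by rw [← add_mul, hab, one_mul]
  have hxx : a * x + b * x = x := by rw [← add_mul, hab, one_mul]
  have hyy : a * y + b * y = y := by rw [← add_mul, hab, one_mul]
  have hmem : a * x + b * y ∈ Icc (0:ℝ) (N / γ) := by
    constructor
    · have := mul_nonneg ha hx1.1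
      have := mul_nonneg hb hy1.1
      linarith
    · have := mul_le_mul_of_nonneg_left hx1.2 ha
      have := mul_le_mul_of_nonneg_left hy1.2 hb
      linarith
  refine ⟨hmem, ?_⟩
  rcases le_total x y with h | h
  · exact hkey x y (a * x + b * y) hx1 hy1
      (by have := mul_le_mul_of_nonneg_left h hb; linarith)
      (by have := mul_le_mul_of_nonneg_left h ha; linarith) hx.2 hy.2
  · exact hkey y x (a * x + b * y) hy1 hx1
      (by have := mul_le_mul_of_nonneg_left h ha; linarith)
      (by have := mul_le_mul_of_nonneg_left h hb; linarith) hy.2 hx.2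
end

section
/- Assume N > 0, γ > 0, p̂ = N/γ, K > 0, and cost coefficients c_1, …, c_n ≥ 0. Then the restricted pay-as-bid game with strategy sets [0, p̂] and utilities u_i^r admits a pure-strategy Nash equilibrium: there exists (p_1*, …, p_n*) ∈ [0, p̂]^n such that for every i and every p_i ∈ [0, p̂], u_i^r(p_i, p_{-i}*) ≤ u_i^r(p_i*, p_{-i}*). -/
open Set

lemma quadmax (a K c x X phi : ℝ) (ha : 0 < a) (hK : 0 < K) (hc : 0 ≤ c)
    (hvert : x * (a + K + 2*a*K*c) = a*K*phi) :
    X*(a*phi + x - X)/a - X^2/(2*K) - c*X^2 ≤ phi*x - x^2/(2*K) - c*x^2 := by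
  have h2 : 0 < 2*a*K := by positivity
  have hphi : phi = x * (a + K + 2*a*K*c) / (a*K) := by
    rw [eq_div_iff (by positivity)]; linarith [hvert]
  subst hphi
  have key : (x * (a + K + 2*a*K*c) / (a*K)*x - x^2/(2*K) - c*x^2
      - (X*(a*(x * (a + K + 2*a*K*c) / (a*K)) + x - X)/a - X^2/(2*K) - c*X^2)) * (2*a*K)
      = (a + 2*K + 2*a*K*c) * (x - X)^2 := by
    field_simp
    ring
  have hnn : 0 ≤ (a + 2*K + 2*a*K*c) * (x - X)^2 := by positivity
  nlinarith [key, hnn, h2]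

lemma clear_unique {n : ℕ} {γ K N : ℝ} (hγ : 0 < γ) (hK : 0 ≤ K) (pv : Fin n → ℝ)
    {p q : ℝ} (hp : N - γ*p = ∑ j, K * max (p - pv j) 0)
    (hq : N - γ*q = ∑ j, K * max (q - pv j) 0) : p = q := by
  rcases lt_trichotomy p q with h | h | h
  · exfalso
    have hs : ∑ j, K * max (p - pv j) 0 ≤ ∑ j, K * max (q - pv j) 0 :=
      Finset.sum_le_sum fun j _ =>
        mul_le_mul_of_nonneg_left (max_le_max (by linarith) le_rfl) hK
    nlinarith
  · exact h
  · exfalso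
    have hs : ∑ j, K * max (q - pv j) 0 ≤ ∑ j, K * max (p - pv j) 0 :=
      Finset.sum_le_sum fun j _ =>
        mul_le_mul_of_nonneg_left (max_le_max (by linarith) le_rfl) hK
    nlinarith

/-- the restricted pay-as-bid game with strategy sets `[0, p̂]` and
utilities `u_i^r` admits a pure-strategy Nash equilibrium. -/
theorem stmt15 (n : ℕ) (N γ K : ℝ) (hN : 0 < N) (hγ : 0 < γ) (hK : 0 < K)
    (c : Fin n → ℝ) (hc : ∀ i, 0 ≤ c i)
    (φ : (Fin n → ℝ) → ℝ)
    (hφ : ∀ pv : Fin n → ℝ, (∀ j, pv j ∈ Icc 0 (N / γ)) →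
      φ pv ∈ Icc 0 (N / γ) ∧ N - γ * φ pv = ∑ j, K * max (φ pv - pv j) 0) :
    ∃ ps : Fin n → ℝ, (∀ i, ps i ∈ Icc 0 (N / γ)) ∧
      ∀ i : Fin n, ∀ t ∈ Icc (0:ℝ) (N / γ),
        uir K (c i) (φ (Function.update ps i t)) t ≤ uir K (c i) (φ ps) (ps i) := by
  rcases Nat.eq_zero_or_pos n with hn | hn
  · subst hn
    exact ⟨fun i => i.elim0, fun i => i.elim0, fun i => i.elim0⟩
  have hn1 : (1:ℝ) ≤ (n:ℝ) := by exact_mod_cast hn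
  set a : ℝ := γ + ((n:ℝ) - 1) * K with ha_def
  have ha : 0 < a := by nlinarith
  set d : Fin n → ℝ := fun i => γ + (n:ℝ)*K + 2*a*K*c i with hd_def
  have hd : ∀ i, 0 < d i := by
    intro i
    have h1 : 0 ≤ 2*a*K*c i := by have := hc i; positivity
    have h2 : 0 < (n:ℝ)*K := by positivity
    show 0 < γ + (n:ℝ)*K + 2*a*K*c i
    linarith
  set S : ℝ := ∑ j, a / d j with hS_def
  have hS0 : 0 ≤ S := Finset.sum_nonneg fun j _ => div_nonneg ha.le (hd j).le
  have hden : 0 < γ + K * S := by positivity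
  set φ0 : ℝ := N / (γ + K*S) with hφ0_def
  have hφ0pos : 0 < φ0 := div_pos hN hden
  have hφ0le : φ0 ≤ N / γ := by
    rw [hφ0_def]
    apply div_le_div_of_nonneg_left hN.le hγ
    nlinarith
  have hclear0 : N = φ0 * (γ + K*S) := by
    rw [hφ0_def, div_mul_cancel₀ _ (ne_of_gt hden)]
  set x : Fin n → ℝ := fun i => a*K*φ0 / d i with hx_def
  have hxpos : ∀ i, 0 < x i := fun i => div_pos (by positivity) (hd i)
  have hvert : ∀ i, x i * d i = a*K*φ0 := fun i =>
    div_mul_cancel₀ _ (ne_of_gt (hd i))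
  set ps : Fin n → ℝ := fun i => φ0 - x i / K with hps_def
  have had : ∀ i, a ≤ d i := by
    intro i
    have h1 : 0 ≤ 2*a*K*c i := by have := hc i; positivity
    show a ≤ γ + (n:ℝ)*K + 2*a*K*c i
    rw [ha_def]; nlinarith
  have hxle : ∀ i, x i / K ≤ φ0 := by
    intro i
    rw [div_le_iff₀ hK]
    show a*K*φ0 / d i ≤ φ0 * K
    rw [div_le_iff₀ (hd i)]
    nlinarith [mul_le_mul_of_nonneg_left (had i) (by positivity : (0:ℝ) ≤ K*φ0)]
  have hpsmem : ∀ i, ps i ∈ Icc 0 (N/γ) := by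
    intro i
    constructor
    · show 0 ≤ φ0 - x i / K
      linarith [hxle i]
    · show φ0 - x i / K ≤ N / γ
      have : 0 ≤ x i / K := le_of_lt (div_pos (hxpos i) hK)
      linarith
  have hsum_x : ∑ j, x j = K * φ0 * S := by
    rw [hS_def, Finset.mul_sum]
    apply Finset.sum_congr rfl
    intro j _
    show a*K*φ0 / d j = K * φ0 * (a / d j)
    field_simp
  have hKps : ∀ j, K * ps j = K * φ0 - x j := by
    intro j
    show K * (φ0 - x j / K) = K * φ0 - x j
    rw [mul_sub, mul_div_cancel₀ _ (ne_of_gt hK)]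
  have hclear_ps : N - γ * φ0 = ∑ j, K * max (φ0 - ps j) 0 := by
    have h1 : ∀ j, K * max (φ0 - ps j) 0 = x j := by
      intro j
      have h2 : φ0 - ps j = x j / K := by show φ0 - (φ0 - x j / K) = x j / K; ring
      rw [h2, max_eq_left (le_of_lt (div_pos (hxpos j) hK)), mul_div_cancel₀ _ (ne_of_gt hK)]
    rw [Finset.sum_congr rfl fun j _ => h1 j, hsum_x]
    linear_combination hclear0
  have hφps : φ ps = φ0 := by
    obtain ⟨_, heq⟩ := hφ ps hpsmem
    exact clear_unique hγ hK.le ps heq hclear_ps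
  refine ⟨ps, hpsmem, ?_⟩
  intro i t ht
  have hupd_mem : ∀ j, Function.update ps i t j ∈ Icc 0 (N/γ) := by
    intro j
    rcases eq_or_ne j i with rfl | hji
    · rwa [Function.update_self]
    · rw [Function.update_of_ne hji]; exact hpsmem j
  obtain ⟨hmemd, heqd⟩ := hφ (Function.update ps i t) hupd_mem
  rw [hφps]
  obtain ⟨ψ, hψ⟩ : ∃ ψ, φ (Function.update ps i t) = ψ := ⟨_, rfl⟩
  rw [hψ] at heqd ⊢
  simp only [uir]
  have hmax : K * max (φ0 - ps i) 0 = x i := by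
    have h2 : φ0 - ps i = x i / K := by show φ0 - (φ0 - x i / K) = x i / K; ring
    rw [h2, max_eq_left (le_of_lt (div_pos (hxpos i) hK)), mul_div_cancel₀ _ (ne_of_gt hK)]
  rw [hmax]
  set X := K * max (ψ - t) 0 with hX_def
  have hX0 : 0 ≤ X := by positivity
  -- goal: ψ * X - X^2/(2K) - c i * X^2 ≤ φ0 * x i - ...
  have hsplit : ∑ j, K * max (ψ - Function.update ps i t j) 0
      = X + ∑ j ∈ Finset.univ.erase i, K * max (ψ - ps j) 0 := by
    rw [← Finset.add_sum_erase Finset.univ _ (Finset.mem_univ i), Function.update_self]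
    congr 1
    apply Finset.sum_congr rfl
    intro j hj
    rw [Function.update_of_ne (Finset.ne_of_mem_erase hj)]
  set P : ℝ := ∑ j, ps j with hP_def
  have hsum_lin : ∑ j, (K * ψ - K * ps j) = (n:ℝ)*(K*ψ) - K*P := by
    rw [Finset.sum_sub_distrib, Finset.sum_const, Finset.card_univ, Fintype.card_fin,
      nsmul_eq_mul, hP_def, Finset.mul_sum]
  have hbound : (n:ℝ)*(K*ψ) - K*P - (K*ψ - K*(ps i))
      ≤ ∑ j ∈ Finset.univ.erase i, K * max (ψ - ps j) 0 := by
    have h1 : ∑ j ∈ Finset.univ.erase i, (K * ψ - K * ps j)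
        = (∑ j, (K * ψ - K * ps j)) - (K*ψ - K*(ps i)) := by
      rw [← Finset.add_sum_erase Finset.univ _ (Finset.mem_univ i)]
      ring
    have h3 : ∑ j ∈ Finset.univ.erase i, (K * ψ - K * ps j)
        ≤ ∑ j ∈ Finset.univ.erase i, K * max (ψ - ps j) 0 := by
      apply Finset.sum_le_sum
      intro j _
      have h4 : K * (ψ - ps j) ≤ K * max (ψ - ps j) 0 :=
        mul_le_mul_of_nonneg_left (le_max_left _ _) hK.le
      linarith [h4]
    rw [h1, hsum_lin] at h3
    linarith
  have hpsi_ub : a * ψ ≤ N + K*P - K*(ps i) - X := by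
    rw [hsplit] at heqd
    have hexp : a * ψ = γ*ψ + (n:ℝ)*(K*ψ) - K*ψ := by rw [ha_def]; ring
    linarith [hbound, heqd.le, heqd.ge, hexp.le, hexp.ge]
  have hKP : K * P = (n:ℝ)*(K*φ0) - K*φ0*S := by
    rw [hP_def, Finset.mul_sum, Finset.sum_congr rfl fun j _ => hKps j,
      Finset.sum_sub_distrib, Finset.sum_const, Finset.card_univ, Fintype.card_fin,
      nsmul_eq_mul, hsum_x]
  have hM : N + K*P - K*(ps i) = a*φ0 + x i := by
    rw [hKP, hKps i, ha_def]
    linear_combination hclear0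
  have hpsi_ub2 : a * ψ ≤ a*φ0 + x i - X := by rw [← hM]; exact hpsi_ub
  have step1 : ψ * X ≤ X * (a*φ0 + x i - X)/a := by
    have hψle : ψ ≤ (a*φ0 + x i - X)/a := by
      rw [le_div_iff₀ ha]
      calc ψ * a = a * ψ := mul_comm ψ a
        _ ≤ a*φ0 + x i - X := hpsi_ub2
    calc ψ * X ≤ ((a*φ0 + x i - X)/a) * X := mul_le_mul_of_nonneg_right hψle hX0
      _ = X * (a*φ0 + x i - X)/a := by ring
  have hvert' : x i * (a + K + 2*a*K*c i) = a*K*φ0 := by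
    have h0 : a + K + 2*a*K*c i = d i := by
      show a + K + 2*a*K*c i = γ + (n:ℝ)*K + 2*a*K*c i
      rw [ha_def]; ring
    rw [h0]; exact hvert i
  have step2 := quadmax a K (c i) (x i) X φ0 ha hK (hc i) hvert'
  calc ψ * X - X^2/(2*K) - c i * X^2
      ≤ X * (a*φ0 + x i - X)/a - X^2/(2*K) - c i * X^2 := by linarith [step1]
    _ ≤ φ0 * (x i) - (x i)^2/(2*K) - c i * (x i)^2 := step2
end

section
/- (Failure of increasing differences / non-supermodularity of the restricted game) Let N = 100, γ = 1, K = 1, n = 2, and let agent 1 have cost C_1(q) = q²/2. Define u_1(p_1, p_2) = φ·max(φ − p_1, 0) − max(φ − p_1, 0)²/2 − (1/2)·max(φ − p_1, 0)², where φ = φ(p_1, p_2) is the unique p ∈ [0, 100] with 100 − p = max(p − p_1, 0) + max(p − p_2, 0). Then u_1(50, 0) = 0, u_1(50.2, 0) = 0, u_1(50, 1) = 50/3, u_1(50.2, 1) = 251/25, and therefore u_1(50.2, 1) − u_1(50, 1) < u_1(50.2, 0) − u_1(50, 0), so u_1 fails the increasing-differences property for p_1 = 50 ≤ p_1' = 50.2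 and p_2 = 0 ≤ p_2' = 1. -/
open Set

/-- failure of increasing differences (non-supermodularity) of the
restricted game for `N = 100`, `γ = 1`, `K = 1`, `n = 2`, `C₁(q) = q²/2`:
with `u₁(p₁, p₂) = uir 1 (1/2) (φ (p₁, p₂)) p₁` one has `u₁(50,0) = 0`,
`u₁(50.2,0) = 0`, `u₁(50,1) = 50/3`, `u₁(50.2,1) = 251/25`, hence
`u₁(50.2,1) - u₁(50,1) < u₁(50.2,0) - u₁(50,0)`. -/
theorem stmt18 (φ : (Fin 2 → ℝ) → ℝ)
    (hφ : ∀ pv : Fin 2 → ℝ, (∀ j, pv j ∈ Icc (0:ℝ) 100) →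
      φ pv ∈ Icc (0:ℝ) 100 ∧
        100 - φ pv = max (φ pv - pv 0) 0 + max (φ pv - pv 1) 0)
    (u1 : (Fin 2 → ℝ) → ℝ)
    (hu1 : ∀ pv : Fin 2 → ℝ, u1 pv = uir 1 (1 / 2) (φ pv) (pv 0)) :
    u1 ![50, 0] = 0 ∧ u1 ![50.2, 0] = 0 ∧
    u1 ![50, 1] = 50 / 3 ∧ u1 ![50.2, 1] = 251 / 25 ∧
    u1 ![50.2, 1] - u1 ![50, 1] < u1 ![50.2, 0] - u1 ![50, 0] := by
  -- case ![50, 0]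
  obtain ⟨h1A, h2A⟩ := hφ ![50, 0] (by
    intro j; fin_cases j <;> simp <;> norm_num)
  simp only [Matrix.cons_val_zero, Matrix.cons_val_one, Matrix.head_cons, sub_zero] at h2A
  have hA : φ ![50, 0] = 50 := by
    set p := φ ![50, 0] with hp
    have hm1 : max p 0 = p := max_eq_left h1A.1
    rcases le_total p 50 with h | h
    · have : max (p - 50) 0 = 0 := max_eq_right (by linarith)
      linarith [this, hm1, h2A]
    · have : max (p - 50) 0 = p - 50 := max_eq_left (by linarith)
      linarith [this, hm1, h2A]
  -- case ![50.2, 0]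
  obtain ⟨h1B, h2B⟩ := hφ ![50.2, 0] (by
    intro j; fin_cases j <;> simp <;> norm_num)
  simp only [Matrix.cons_val_zero, Matrix.cons_val_one, Matrix.head_cons, sub_zero] at h2B
  have hB : φ ![50.2, 0] = 50 := by
    set p := φ ![50.2, 0] with hp
    have hm1 : max p 0 = p := max_eq_left h1B.1
    rcases le_total p 50.2 with h | h
    · have : max (p - 50.2) 0 = 0 := max_eq_right (by linarith)
      linarith [this, hm1, h2B]
    · have hm0 : max (p - 50.2) 0 = p - 50.2 := max_eq_left (by linarith)
      exfalso
      rw [hm0, hm1] at h2B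
      norm_num at h2B h
      linarith
  -- case ![50, 1]
  obtain ⟨h1C, h2C⟩ := hφ ![50, 1] (by
    intro j; fin_cases j <;> simp <;> norm_num)
  simp only [Matrix.cons_val_zero, Matrix.cons_val_one, Matrix.head_cons] at h2C
  have hC : φ ![50, 1] = 151 / 3 := by
    set p := φ ![50, 1] with hp
    rcases le_total p 50 with h | h
    · have hm0 : max (p - 50) 0 = 0 := max_eq_right (by linarith)
      rcases le_total p 1 with h1 | h1
      · have : max (p - 1) 0 = 0 := max_eq_right (by linarith)
        linarith [this, hm0, h2C]
      · have : max (p - 1) 0 = p - 1 := max_eq_left (by linarith)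
        linarith [this, hm0, h2C]
    · have hm0 : max (p - 50) 0 = p - 50 := max_eq_left (by linarith)
      have hm1 : max (p - 1) 0 = p - 1 := max_eq_left (by linarith)
      linarith [hm0, hm1, h2C]
  -- case ![50.2, 1]
  obtain ⟨h1D, h2D⟩ := hφ ![50.2, 1] (by
    intro j; fin_cases j <;> simp <;> norm_num)
  simp only [Matrix.cons_val_zero, Matrix.cons_val_one, Matrix.head_cons] at h2D
  have hD : φ ![50.2, 1] = 50.4 := by
    set p := φ ![50.2, 1] with hp
    rcases le_total p 50.2 with h | h
    · have hm0 : max (p - 50.2) 0 = 0 := max_eq_right (by linarith)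
      rcases le_total p 1 with h1 | h1
      · have hm1 : max (p - 1) 0 = 0 := max_eq_right (by linarith)
        exfalso
        rw [hm0, hm1] at h2D
        linarith
      · have hm1 : max (p - 1) 0 = p - 1 := max_eq_left (by linarith)
        exfalso
        rw [hm0, hm1] at h2D
        norm_num at h h2D
        linarith
    · have hm0 : max (p - 50.2) 0 = p - 50.2 := max_eq_left (by linarith)
      have hm1 : max (p - 1) 0 = p - 1 := max_eq_left (by linarith)
      rw [hm0, hm1] at h2D
      norm_num at h2D ⊢
      linarith
  -- evaluate utilities
  have eA : u1 ![50, 0] = 0 := by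
    rw [hu1, hA, uir]; norm_num
  have eB : u1 ![50.2, 0] = 0 := by
    rw [hu1, hB, uir]
    simp only [Matrix.cons_val_zero]
    have : max ((50:ℝ) - 50.2) 0 = 0 := max_eq_right (by norm_num)
    rw [this]; ring
  have eC : u1 ![50, 1] = 50 / 3 := by
    rw [hu1, hC, uir]
    simp only [Matrix.cons_val_zero]
    have : max ((151/3:ℝ) - 50) 0 = 1/3 := by rw [max_eq_left (by norm_num)]; norm_num
    rw [this]; norm_num
  have eD : u1 ![50.2, 1] = 251 / 25 := by
    rw [hu1, hD, uir]
    simp only [Matrix.cons_val_zero]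
    have : max ((50.4:ℝ) - 50.2) 0 = 0.2 := by rw [max_eq_left (by norm_num)]; norm_num
    rw [this]; norm_num
  refine ⟨eA, eB, eC, eD, ?_⟩
  rw [eA, eB, eC, eD]; norm_num
end
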